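/- De Finetti's theorem (vector case, special case of Aldous's theorem with one index): every Borel probability measure on ℝ^ℕ that is invariant and ergodic under the group of finite permutations of coordinates is an i.i.d. product measure ν^ℕ for some Borel probability measure ν on ℝ; equivalently, it is the law of (f(ξᵢ))ᵢ for a measurable f : [0,1] → ℝ and i.i.d. uniform ξᵢ. -/

import Mathlib

open MeasureTheory

def IsProductMeasure {ι α : Type*} [MeasurableSpace α] (μ : Measure α) (ν : Measure (ι → α)) :
    Prop :=
  ∀ (s : Finset ι) (A : ι → Set α), (∀ i, MeasurableSet (A i)) →
    ν {x | ∀ i ∈ s, x i ∈ A i} = ∏ i ∈ s, μ (A i)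

open Filter Finset Topology

/-!
Exchangeability makes the second moments of the indicators `1[x n ∈ D]` depend only on whether
the indices coincide, so block averages over blocks of length `4 ^ k` are Cauchy in `L²` fast
enough to converge almost everywhere. Their limit superior depends only on the tail of `x`, so it
is invariant under finite permutations and hence a.e. constant by ergodicity. Pairing the block
averages with the indicator of a cylinder set on coordinates outside the blocks gives
`P (C ∩ {x | x j ∈ D}) = P C * P {x | x 0 ∈ D}`, and induction on the number of constrained
coordinates gives the product formula with `ν` the law of `x 0`.
-/

section BlockAverage

variable {Ω : Type*}

noncomputable def blockAvg (X : ℕ → Ω → ℝ) (I : Finset ℕ) (ω : Ω) : ℝ :=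
  (#I : ℝ)⁻¹ * ∑ n ∈ I, X n ω

variable {X : ℕ → Ω → ℝ}

lemma abs_blockAvg_le {I : Finset ℕ} (hI : I.Nonempty) {C : ℝ} {ω : Ω}
    (hX : ∀ n ∈ I, |X n ω| ≤ C) : |blockAvg X I ω| ≤ C := by
  have hI0 : (0 : ℝ) < #I := by simpa using hI
  rw [blockAvg, abs_mul, abs_inv, Nat.abs_cast, inv_mul_le_iff₀ hI0]
  calc |∑ n ∈ I, X n ω| ≤ ∑ n ∈ I, |X n ω| := abs_sum_le_sum_abs _ _
    _ ≤ ∑ _n ∈ I, C := sum_le_sum hX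
    _ = #I * C := by rw [sum_const, nsmul_eq_mul]

variable [MeasurableSpace Ω] {P : Measure Ω}

lemma measurable_blockAvg (hX : ∀ n, Measurable (X n)) (I : Finset ℕ) :
    Measurable (blockAvg X I) :=
  (Finset.measurable_sum I fun n _ => hX n).const_mul _

lemma memLp_blockAvg (hX : ∀ n, MemLp (X n) 2 P) (I : Finset ℕ) : MemLp (blockAvg X I) 2 P :=
  (memLp_finsetSum I fun n _ => hX n).const_mul _

lemma integral_blockAvg_mul_blockAvg (hX : ∀ n, MemLp (X n) 2 P) {δ γ : ℝ}
    (hcov : ∀ n m, ∫ ω, X n ω * X m ω ∂P = δ + if n = m then γ else 0)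
    {I J : Finset ℕ} (hI : I.Nonempty) (hJ : J.Nonempty) :
    ∫ ω, blockAvg X I ω * blockAvg X J ω ∂P = δ + γ * #(I ∩ J) / (#I * #J) := by
  have hprod : ∀ n m, Integrable (fun ω => X n ω * X m ω) P :=
    fun n m => (hX n).integrable_mul (hX m)
  have hsum : ∑ n ∈ I, ∑ m ∈ J, ∫ ω, X n ω * X m ω ∂P = #I * #J * δ + γ * #(I ∩ J) := by
    simp only [hcov, sum_add_distrib, sum_const, sum_ite_eq, sum_ite_mem, nsmul_eq_mul, mul_assoc]
    ring
  have hI0 : (#I : ℝ) ≠ 0 := by simpa using hI.ne_empty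
  have hJ0 : (#J : ℝ) ≠ 0 := by simpa using hJ.ne_empty
  simp only [blockAvg, mul_mul_mul_comm _ (∑ n ∈ I, _), sum_mul_sum]
  rw [integral_const_mul,
    integral_finsetSum _ fun n _ => integrable_finsetSum _ fun m _ => hprod n m]
  simp only [fun n => integral_finsetSum J fun m _ => hprod n m, hsum]
  field_simp

lemma integral_sq_blockAvg_sub_le (hX : ∀ n, MemLp (X n) 2 P) {δ γ : ℝ} (hγ : 0 ≤ γ)
    (hcov : ∀ n m, ∫ ω, X n ω * X m ω ∂P = δ + if n = m then γ else 0)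
    {I J : Finset ℕ} (hI : I.Nonempty) (hJ : J.Nonempty) :
    ∫ ω, (blockAvg X I ω - blockAvg X J ω) ^ 2 ∂P ≤ γ * ((#I : ℝ)⁻¹ + (#J : ℝ)⁻¹) := by
  have hmul : ∀ I J, Integrable (fun ω => blockAvg X I ω * blockAvg X J ω) P :=
    fun I J => (memLp_blockAvg hX I).integrable_mul (memLp_blockAvg hX J)
  have hexpand : ∀ ω, (blockAvg X I ω - blockAvg X J ω) ^ 2 = blockAvg X I ω * blockAvg X I ω
      - 2 * (blockAvg X I ω * blockAvg X J ω) + blockAvg X J ω * blockAvg X J ω := fun ω => by ring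
  simp only [hexpand]
  rw [integral_add ((hmul I I).sub' ((hmul I J).const_mul 2)) (hmul J J),
    integral_sub (hmul I I) ((hmul I J).const_mul 2), integral_const_mul,
    integral_blockAvg_mul_blockAvg hX hcov hI hI, integral_blockAvg_mul_blockAvg hX hcov hI hJ,
    integral_blockAvg_mul_blockAvg hX hcov hJ hJ, inter_self, inter_self]
  have hI0 : (0 : ℝ) < #I := by simpa using hI
  have hJ0 : (0 : ℝ) < #J := by simpa using hJ
  have hcross : 0 ≤ γ * #(I ∩ J) / (#I * #J) := by positivity
  field_simp
  nlinarith

lemma eLpNorm_two_eq_ofReal_sqrt {f : Ω → ℝ} (hf : MemLp f 2 P) :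
    eLpNorm f 2 P = ENNReal.ofReal (√(∫ ω, f ω ^ 2 ∂P)) := by
  rw [hf.eLpNorm_eq_integral_rpow_norm two_ne_zero ENNReal.ofNat_ne_top, Real.sqrt_eq_rpow]
  simp [Real.norm_eq_abs, sq_abs]

lemma ae_tendsto_blockAvg (hX : ∀ n, MemLp (X n) 2 P) {δ γ : ℝ} (hγ : 0 ≤ γ)
    (hcov : ∀ n m, ∫ ω, X n ω * X m ω ∂P = δ + if n = m then γ else 0)
    {I : ℕ → Finset ℕ} (hI : ∀ k, 4 ^ k ≤ #(I k)) :
    ∀ᵐ ω ∂P, ∃ l, Tendsto (fun k => blockAvg X (I k) ω) atTop (𝓝 l) := by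
  have hne : ∀ k, (I k).Nonempty := fun k => card_pos.mp ((pow_pos (by norm_num) k).trans_le (hI k))
  have hsmall : ∀ N k, N ≤ k → ((#(I k) : ℕ) : ℝ)⁻¹ ≤ (1 / 4) ^ N := fun N k hk => by
    rw [one_div, inv_pow]
    gcongr
    exact_mod_cast (Nat.pow_le_pow_right (by norm_num) hk).trans (hI k)
  refine Lp.ae_tendsto_of_cauchy_eLpNorm (p := 2) (fun k => (memLp_blockAvg hX (I k)).1)
    one_le_two (B := fun N => ENNReal.ofReal ((γ + 1) * (1 / 2) ^ N)) ?_ ?_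
  · rw [← ENNReal.ofReal_tsum_of_nonneg (fun N => by positivity)
      (summable_geometric_two.mul_left _)]
    exact ENNReal.ofReal_ne_top
  intro N n m hn hm
  rw [eLpNorm_two_eq_ofReal_sqrt ((memLp_blockAvg hX _).sub (memLp_blockAvg hX _)),
    ENNReal.ofReal_lt_ofReal_iff (by positivity), Real.sqrt_lt' (by positivity)]
  have hquarter : ((1 / 2 : ℝ) ^ N) ^ 2 = (1 / 4) ^ N := by
    rw [← pow_mul, mul_comm, pow_mul]; norm_num
  calc ∫ ω, (blockAvg X (I n) - blockAvg X (I m)) ω ^ 2 ∂P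
      ≤ γ * ((#(I n) : ℝ)⁻¹ + (#(I m) : ℝ)⁻¹) :=
        integral_sq_blockAvg_sub_le hX hγ hcov (hne n) (hne m)
    _ ≤ γ * (2 * (1 / 4) ^ N) := by
        gcongr
        linarith [hsmall N n hn, hsmall N m hm]
    _ < ((γ + 1) * (1 / 2) ^ N) ^ 2 := by
        rw [mul_pow, hquarter]
        have : (0 : ℝ) < (1 / 4) ^ N := by positivity
        nlinarith [mul_pos this (by positivity : (0 : ℝ) < γ ^ 2 + 1)]

lemma integral_mul_blockAvg {h : Ω → ℝ} {c : ℝ} {I : Finset ℕ} (hI : I.Nonempty)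
    (hint : ∀ n ∈ I, Integrable (fun ω => h ω * X n ω) P)
    (hc : ∀ n ∈ I, ∫ ω, h ω * X n ω ∂P = c) :
    ∫ ω, h ω * blockAvg X I ω ∂P = c := by
  have hI0 : (#I : ℝ) ≠ 0 := by simpa using hI.ne_empty
  have hexpand : ∀ ω, h ω * blockAvg X I ω = (#I : ℝ)⁻¹ * ∑ n ∈ I, h ω * X n ω := fun ω => by
    rw [blockAvg, mul_left_comm, mul_sum]
  simp only [hexpand]
  rw [integral_const_mul, integral_finsetSum _ hint, sum_congr rfl hc, sum_const, nsmul_eq_mul]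
  field_simp

lemma eq_mul_integral_of_ae_tendsto {g : ℕ → Ω → ℝ} {h : Ω → ℝ} {C c t : ℝ}
    (hg : ∀ k, AEStronglyMeasurable (g k) P) (hbound : ∀ k ω, |g k ω| ≤ C)
    (hlim : ∀ᵐ ω ∂P, Tendsto (fun k => g k ω) atTop (𝓝 t)) (hh : Integrable h P)
    (hc : ∀ k, ∫ ω, h ω * g k ω ∂P = c) :
    c = t * ∫ ω, h ω ∂P := by
  have hdom := tendsto_integral_of_dominated_convergence (F := fun k ω => h ω * g k ω)
    (fun ω => C * ‖h ω‖)
    (fun k => hh.aestronglyMeasurable.mul (hg k)) (hh.norm.const_mul C)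
    (fun k => ae_of_all _ fun ω => by
      rw [norm_mul, mul_comm, Real.norm_eq_abs (g k ω)]
      exact mul_le_mul_of_nonneg_right (hbound k ω) (norm_nonneg _))
    (hlim.mono fun ω hω => hω.const_mul (h ω))
  simp only [hc] at hdom
  rw [tendsto_const_nhds_iff.mp hdom, integral_mul_const, mul_comm]

end BlockAverage

lemma finite_swap_ne {β : Type*} [DecidableEq β] (a b : β) : {n | Equiv.swap a b n ≠ n}.Finite :=
  (Set.toFinite {a, b}).subset fun n hn => by
    by_contra h
    simp only [Set.mem_insert_iff, Set.mem_singleton_iff, not_or] at h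
    exact hn (Equiv.swap_apply_of_ne_of_ne h.1 h.2)

lemma finite_mul_ne {β : Type*} {g h : Equiv.Perm β} (hg : {n | g n ≠ n}.Finite)
    (hh : {n | h n ≠ n}.Finite) : {n | (g * h) n ≠ n}.Finite :=
  (hg.union hh).subset fun n hn => by
    by_contra hgh
    simp only [Set.mem_union, Set.mem_ofPred_eq, not_or, not_not] at hgh
    exact hn (by rw [Equiv.Perm.mul_apply, hgh.2, hgh.1])

section Exchangeable

variable {α : Type*}

noncomputable def coordIndicator (D : Set α) (n : ℕ) (x : ℕ → α) : ℝ :=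
  D.indicator 1 (x n)

lemma coordIndicator_eq_indicator (D : Set α) (n : ℕ) :
    coordIndicator D n = {x | x n ∈ D}.indicator 1 := by
  ext x
  exact (Set.indicator_comp_right (fun x : ℕ → α => x n) (g := 1) (s := D)).symm

lemma abs_coordIndicator_le (D : Set α) (n : ℕ) (x : ℕ → α) : |coordIndicator D n x| ≤ 1 := by
  unfold coordIndicator Set.indicator
  split_ifs <;> simp

lemma indicator_mul_coordIndicator (S : Set (ℕ → α)) (D : Set α) (n : ℕ) (x : ℕ → α) :
    S.indicator 1 x * coordIndicator D n x =
      (S ∩ {x | x n ∈ D}).indicator (1 : (ℕ → α) → ℝ) x := by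
  rw [coordIndicator_eq_indicator, Set.inter_indicator_one]; rfl

variable [MeasurableSpace α]

def IsExchangeable (P : Measure (ℕ → α)) : Prop :=
  ∀ g : Equiv.Perm ℕ, {n | g n ≠ n}.Finite → P.map (fun x n => x (g n)) = P

def IsPermErgodic (P : Measure (ℕ → α)) : Prop :=
  ∀ S : Set (ℕ → α), MeasurableSet S →
    (∀ g : Equiv.Perm ℕ, {n | g n ≠ n}.Finite → (fun x (n : ℕ) => x (g n)) ⁻¹' S = S) →
    P S = 0 ∨ P S = 1

lemma measurableSet_coord_mem {D : Set α} (hD : MeasurableSet D) (n : ℕ) :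
    MeasurableSet {x : ℕ → α | x n ∈ D} :=
  measurable_pi_apply n hD

lemma measurable_coordIndicator {D : Set α} (hD : MeasurableSet D) (n : ℕ) :
    Measurable (coordIndicator D n) :=
  (measurable_one.indicator hD).comp (measurable_pi_apply n)

variable {P : Measure (ℕ → α)}

namespace IsExchangeable

lemma measure_preimage (hP : IsExchangeable P) {g : Equiv.Perm ℕ} (hg : {n | g n ≠ n}.Finite)
    {S : Set (ℕ → α)} (hS : MeasurableSet S) : P ((fun x n => x (g n)) ⁻¹' S) = P S := by
  conv_rhs => rw [← hP g hg]
  rw [Measure.map_apply (measurable_pi_lambda _ fun n => measurable_pi_apply (g n)) hS]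

lemma measure_coord_mem (hP : IsExchangeable P) {D : Set α} (hD : MeasurableSet D) (n : ℕ) :
    P {x | x n ∈ D} = P {x | x 0 ∈ D} := by
  rw [← hP.measure_preimage (finite_swap_ne 0 n) (measurableSet_coord_mem hD 0)]
  simp

lemma measure_coord_mem_inter (hP : IsExchangeable P) {D : Set α} (hD : MeasurableSet D)
    {n m : ℕ} (hnm : n ≠ m) :
    P ({x | x n ∈ D} ∩ {x | x m ∈ D}) = P ({x | x 0 ∈ D} ∩ {x | x 1 ∈ D}) := by
  -- `swap 0 n * swap 1 k` with `k = swap 0 n m` sends `0 ↦ n` and `1 ↦ m`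
  set k := Equiv.swap 0 n m
  have hk : k ≠ 0 := fun h =>
    hnm ((Equiv.swap_apply_eq_iff.mp h).trans (Equiv.swap_apply_left 0 n)).symm
  rw [← hP.measure_preimage (finite_mul_ne (finite_swap_ne 0 n) (finite_swap_ne 1 k))
    ((measurableSet_coord_mem hD 0).inter (measurableSet_coord_mem hD 1))]
  congr 1
  ext x
  simp [Equiv.swap_apply_of_ne_of_ne zero_ne_one hk.symm, k]

lemma measure_pi_inter_coord_mem_eq (hP : IsExchangeable P) {s : Finset ℕ} {A : ℕ → Set α}
    (hA : ∀ i, MeasurableSet (A i)) {D : Set α} (hD : MeasurableSet D) {j n : ℕ}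
    (hj : j ∉ s) (hn : n ∉ s) :
    P ((s : Set ℕ).pi A ∩ {x | x n ∈ D}) = P ((s : Set ℕ).pi A ∩ {x | x j ∈ D}) := by
  have hfix : ∀ i ∈ s, Equiv.swap j n i = i := fun i hi =>
    Equiv.swap_apply_of_ne_of_ne (ne_of_mem_of_not_mem hi hj) (ne_of_mem_of_not_mem hi hn)
  rw [← hP.measure_preimage (finite_swap_ne j n)
    ((MeasurableSet.pi s.countable_toSet fun i _ => hA i).inter (measurableSet_coord_mem hD j))]
  congr 1
  ext x
  simp +contextual [Set.mem_pi, hfix]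

end IsExchangeable

lemma integral_indicator_mul_coordIndicator [IsFiniteMeasure P] {S : Set (ℕ → α)}
    (hS : MeasurableSet S) {D : Set α} (hD : MeasurableSet D) (n : ℕ) :
    ∫ x, S.indicator 1 x * coordIndicator D n x ∂P = P.real (S ∩ {x | x n ∈ D}) := by
  simp only [indicator_mul_coordIndicator]
  exact integral_indicator_one (hS.inter (measurableSet_coord_mem hD n))

lemma IsExchangeable.integral_coordIndicator_mul (hP : IsExchangeable P) [IsFiniteMeasure P]
    {D : Set α} (hD : MeasurableSet D) (n m : ℕ) :
    ∫ x, coordIndicator D n x * coordIndicator D m x ∂P =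
      P.real ({x | x 0 ∈ D} ∩ {x | x 1 ∈ D}) +
        if n = m then P.real {x | x 0 ∈ D} - P.real ({x | x 0 ∈ D} ∩ {x | x 1 ∈ D}) else 0 := by
  rw [coordIndicator_eq_indicator,
    integral_indicator_mul_coordIndicator (measurableSet_coord_mem hD n) hD]
  split_ifs with hnm
  · subst hnm
    simp [measureReal_def, hP.measure_coord_mem hD]
  · simp [measureReal_def, hP.measure_coord_mem_inter hD hnm]

lemma IsPermErgodic.ae_eq_const [IsProbabilityMeasure P] (hP : IsPermErgodic P)
    {f : (ℕ → α) → ℝ} (hf : Measurable f)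
    (hinv : ∀ g : Equiv.Perm ℕ, {n | g n ≠ n}.Finite → ∀ x, f (fun n => x (g n)) = f x) :
    ∃ c, f =ᵐ[P] Function.const _ c := by
  refine exists_eventuallyEq_const_of_forall_separating MeasurableSet fun U hU => ?_
  rcases hP (f ⁻¹' U) (hf hU) (fun g hg => by ext x; simp [hinv g hg x]) with h0 | h1
  · exact Or.inr (measure_eq_zero_iff_ae_notMem.mp h0)
  · exact Or.inl ((prob_compl_eq_zero_iff (hf hU)).mpr h1)

lemma IsPermErgodic.exists_ae_tendsto_blockAvg [IsProbabilityMeasure P] (herg : IsPermErgodic P)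
    (hexch : IsExchangeable P) {D : Set α} (hD : MeasurableSet D) (M : ℕ) :
    ∃ t, ∀ᵐ x ∂P, Tendsto
      (fun k => blockAvg (coordIndicator D) (Ico (M + k) (M + k + 4 ^ k)) x) atTop (𝓝 t) := by
  set g := fun k => blockAvg (coordIndicator D) (Ico (M + k) (M + k + 4 ^ k))
  have hmeas : ∀ k, Measurable (g k) := fun k =>
    measurable_blockAvg (measurable_coordIndicator hD) _
  have hconv : ∀ᵐ x ∂P, ∃ l, Tendsto (fun k => g k x) atTop (𝓝 l) :=
    ae_tendsto_blockAvg
      (fun n => coordIndicator_eq_indicator D n ▸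
        memLp_indicator_const 2 (measurableSet_coord_mem hD n) 1 (Or.inr (measure_ne_top _ _)))
      (sub_nonneg.mpr (measureReal_mono Set.inter_subset_left))
      (hexch.integral_coordIndicator_mul hD)
      (fun k => by simp)
  have hinv : ∀ π : Equiv.Perm ℕ, {n | π n ≠ n}.Finite → ∀ x,
      limsup (fun k => g k (fun n => x (π n))) atTop = limsup (fun k => g k x) atTop := by
    intro π hπ x
    obtain ⟨K, hK⟩ := hπ.bddAbove
    refine limsup_congr (eventually_atTop.mpr ⟨K + 1, fun k hk => ?_⟩)
    simp only [g, blockAvg]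
    refine congrArg _ (sum_congr rfl fun n hn => ?_)
    have hπn : π n = n := by
      by_contra h
      have := hK h
      simp only [mem_Ico] at hn
      omega
    simp only [coordIndicator, hπn]
  obtain ⟨t, ht⟩ := herg.ae_eq_const (Measurable.limsup hmeas) hinv
  refine ⟨t, ?_⟩
  filter_upwards [hconv, ht] with x ⟨l, hl⟩ hx
  rwa [← show l = t from hl.limsup_eq.symm.trans hx]

lemma IsPermErgodic.measure_pi_inter_coord_mem_eq_mul [IsProbabilityMeasure P]
    (herg : IsPermErgodic P) (hexch : IsExchangeable P) {s : Finset ℕ} {A : ℕ → Set α} (hA : ∀ i, MeasurableSet (A i))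
    {D : Set α} (hD : MeasurableSet D) {j : ℕ} (hj : j ∉ s) :
    P ((s : Set ℕ).pi A ∩ {x | x j ∈ D}) = P ((s : Set ℕ).pi A) * P {x | x 0 ∈ D} := by
  obtain ⟨M, hM⟩ := s.exists_nat_subset_range
  set I := fun k => Ico (M + k) (M + k + 4 ^ k)
  have hIs : ∀ k, ∀ n ∈ I k, n ∉ s := fun k n hn hns => by
    have := mem_range.mp (hM hns)
    simp only [I, mem_Ico] at hn
    omega
  have hIne : ∀ k, (I k).Nonempty := fun k =>
    nonempty_Ico.mpr (Nat.lt_add_of_pos_right (by positivity))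
  obtain ⟨t, ht⟩ := herg.exists_ae_tendsto_blockAvg hexch hD M
  have hlimit : ∀ S, MeasurableSet S →
      (∀ n ∉ s, P.real (S ∩ {x | x n ∈ D}) = P.real (S ∩ {x | x j ∈ D})) →
      P.real (S ∩ {x | x j ∈ D}) = t * P.real S := fun S hS hSn => by
    rw [← integral_indicator_one hS]
    refine eq_mul_integral_of_ae_tendsto (C := 1)
      (fun k => (measurable_blockAvg (measurable_coordIndicator hD) _).aestronglyMeasurable)
      (fun k x => abs_blockAvg_le (hIne k) fun n _ => abs_coordIndicator_le D n x) ht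
      ((integrable_const 1).indicator hS) fun k => integral_mul_blockAvg (hIne k) (fun n _ => ?_)
        fun n hn => by rw [integral_indicator_mul_coordIndicator hS hD, hSn n (hIs k n hn)]
    simp only [indicator_mul_coordIndicator]
    exact (integrable_const 1).indicator (hS.inter (measurableSet_coord_mem hD n))
  have hC : MeasurableSet ((s : Set ℕ).pi A) := MeasurableSet.pi s.countable_toSet fun i _ => hA i
  have hβ := hlimit Set.univ MeasurableSet.univ fun n _ => by
    simp only [Set.univ_inter, measureReal_def, hexch.measure_coord_mem hD]
  have hCβ := hlimit _ hC fun n hn => by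
    rw [measureReal_def, hexch.measure_pi_inter_coord_mem_eq hA hD hj hn, measureReal_def]
  simp only [Set.univ_inter, probReal_univ, mul_one] at hβ
  rw [← hexch.measure_coord_mem hD j, ← ENNReal.toReal_eq_toReal_iff' (measure_ne_top _ _)
    (ENNReal.mul_ne_top (measure_ne_top _ _) (measure_ne_top _ _)), ENNReal.toReal_mul]
  simp only [← measureReal_def]
  rw [hCβ, hβ, mul_comm]

lemma IsPermErgodic.measure_pi_eq_prod [IsProbabilityMeasure P] (herg : IsPermErgodic P)
    (hexch : IsExchangeable P) (s : Finset ℕ) {A : ℕ → Set α} (hA : ∀ i, MeasurableSet (A i)) :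
    P ((s : Set ℕ).pi A) = ∏ i ∈ s, P {x | x 0 ∈ A i} := by
  classical
  induction s using Finset.induction_on with
  | empty => simp
  | insert j s hj ih =>
    rw [coe_insert, Set.insert_pi, Set.inter_comm, prod_insert hj, ← ih, mul_comm]
    exact herg.measure_pi_inter_coord_mem_eq_mul hexch hA (hA j) hj

end Exchangeable

/-- De Finetti's theorem: every Borel probability measure on `ℝ^ℕ` invariant and ergodic under
the finite permutations of coordinates is an i.i.d. product measure. -/
theorem stmt_16 (P : Measure (ℕ → ℝ)) [IsProbabilityMeasure P]
    (hinv : ∀ g : Equiv.Perm ℕ, {n | g n ≠ n}.Finite →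
      P.map (fun x n => x (g n)) = P)
    (herg : ∀ S : Set (ℕ → ℝ), MeasurableSet S →
      (∀ g : Equiv.Perm ℕ, {n | g n ≠ n}.Finite → (fun x (n : ℕ) => x (g n)) ⁻¹' S = S) →
      P S = 0 ∨ P S = 1) :
    ∃ μ : Measure ℝ, IsProbabilityMeasure μ ∧ IsProductMeasure μ P := by
  refine ⟨P.map (fun x => x 0),
    Measure.isProbabilityMeasure_map (measurable_pi_apply 0).aemeasurable, fun s A hA => ?_⟩
  rw [show {x : ℕ → ℝ | ∀ i ∈ s, x i ∈ A i} = (s : Set ℕ).pi A from rfl,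
    IsPermErgodic.measure_pi_eq_prod herg hinv s hA]
  exact prod_congr rfl fun i _ => (Measure.map_apply (measurable_pi_apply 0) (hA i)).symm
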